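/- Let p and q be prime numbers with q = p + 2 and p ≡ 3 (mod 4). Let L be a field equipped with a ℚ₂-algebra structure such that L has dimension 2 as a ℚ₂-vector space, and let α ∈ L satisfy α² = -1. Then there exist z, w ∈ L with α·w² + 1 - (p+q)z² + z⁴ = 0 if and only if p ≡ 7 (mod 8). -/

import Mathlib

/-!
Write `γ = p + q = 2q - 2`; the equation says `w² = α (z⁴ - γ z² + 1)`.

If `p ≡ 7 (mod 8)`, then `q ≡ 1 (mod 8)` is a square `s²` in `ℚ₂` by Hensel's lemma, and
`(z, w) = (α, (1 + α) s)` is a solution.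

If `p ≡ 3 (mod 8)`, then `|γ|₂ = 1/8`. Measure `x ∈ L` by `|N(x)|₂ = 2 ^ (-v(x))`, where `v` is the
valuation of `L ≅ ℚ₂(i)` with uniformiser `1 + α`. In coordinates `x = a + bα` this is
`|a² + b²|₂`, and a congruence modulo 32 shows that every unit squares to `±1` modulo
`(1 + α)⁵`.
* If `v(z) > 0`, then `w² ≡ α` modulo `(1 + α)⁴`, which is impossible: `w` would be a unit and
  `α ∓ 1` has valuation 1.
* If `v(z) < 0`, the palindromic quartic lets `z ↦ z⁻¹` reduce to the previous case.
* If `v(z) = 0`, then `z⁴ - γ z² + 1 ≡ 2 ∓ γ` modulo `(1 + α)⁷`, so `w = (1 + α) u` with `u` a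
  unit and `2u² ≡ 2 ∓ γ`. But `2u² ≡ ±2` modulo `(1 + α)⁷`, and `2 ∓ γ ∓ 2` has valuation at
  most 6 because `v(γ) = 6`.
-/

namespace PadicInt

lemma norm_le_of_toZModPow_eq_zero {p : ℕ} [Fact p.Prime] {n : ℕ} {x : ℤ_[p]}
    (h : toZModPow n x = 0) : ‖x‖ ≤ (p : ℝ) ^ (-n : ℤ) := by
  rwa [← RingHom.mem_ker, ker_toZModPow, ← norm_le_pow_iff_mem_span_pow] at h

lemma norm_sq_add_sq_sub_two_le {a b : ℤ_[2]} (ha : IsUnit a) (hb : IsUnit b) :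
    ‖a ^ 2 + b ^ 2 - 2‖ ≤ 1 / 4 := by
  have key : ∀ x y : ZMod (2 ^ 2), IsUnit x → IsUnit y → x ^ 2 + y ^ 2 - 2 = 0 := by decide
  have := norm_le_of_toZModPow_eq_zero (n := 2) (x := a ^ 2 + b ^ 2 - 2)
    (by simpa [map_ofNat] using key _ _ (ha.map (toZModPow 2)) (hb.map (toZModPow 2)))
  norm_num at this ⊢
  exact this

lemma norm_sq_sub_sq_sub_one_sq_add_le {a c : ℤ_[2]} (ha : IsUnit a) :
    ‖(a ^ 2 - (2 * c) ^ 2 - 1) ^ 2 + (2 * a * (2 * c)) ^ 2‖ ≤ 1 / 32 := by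
  have key : ∀ x y : ZMod (2 ^ 5), IsUnit x →
      (x ^ 2 - (2 * y) ^ 2 - 1) ^ 2 + (2 * x * (2 * y)) ^ 2 = 0 := by
    decide
  have := norm_le_of_toZModPow_eq_zero (n := 5)
    (x := (a ^ 2 - (2 * c) ^ 2 - 1) ^ 2 + (2 * a * (2 * c)) ^ 2)
    (by simpa [map_ofNat] using key _ (toZModPow 5 c) (ha.map (toZModPow 5)))
  norm_num at this ⊢
  exact this

end PadicInt

namespace IsUltrametricDist

lemma norm_add_eq_right_of_norm_lt {S : Type*} [SeminormedAddGroup S] [IsUltrametricDist S]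
    {x y : S} (h : ‖x‖ < ‖y‖) : ‖x + y‖ = ‖y‖ := by
  rw [norm_add_eq_max_of_norm_ne_norm h.ne, max_eq_right h.le]

end IsUltrametricDist

lemma norm_eq_one_of_sq_eq_one {K : Type*} [NormedDivisionRing K] {x : K} (h : x ^ 2 = 1) :
    ‖x‖ = 1 := by
  rcases sq_eq_one_iff.1 h with rfl | rfl <;> simp

namespace Padic

lemma norm_two : ‖(2 : ℚ_[2])‖ = 1 / 2 := by
  simpa using norm_p (p := 2)

lemma norm_le_one_of_norm_lt_two {x : ℚ_[2]} (h : ‖x‖ < 2) : ‖x‖ ≤ 1 := by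
  simpa using (norm_le_pow_iff_norm_lt_pow_add_one x 0).2 (by simpa using h)

lemma norm_le_half_of_norm_lt_one {x : ℚ_[2]} (h : ‖x‖ < 1) : ‖x‖ ≤ 1 / 2 := by
  simpa using (norm_le_pow_iff_norm_lt_pow_add_one x (-1)).2 (by simpa using h)

lemma norm_sq_add_sq_of_norm_eq_one {a b : ℚ_[2]} (ha : ‖a‖ = 1) (hb : ‖b‖ = 1) :
    ‖a ^ 2 + b ^ 2‖ = 1 / 2 := by
  obtain ⟨A, rfl⟩ : ∃ A : ℤ_[2], (A : ℚ_[2]) = a := ⟨⟨a, ha.le⟩, rfl⟩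
  obtain ⟨B, rfl⟩ : ∃ B : ℤ_[2], (B : ℚ_[2]) = b := ⟨⟨b, hb.le⟩, rfl⟩
  have h : ‖(A : ℚ_[2]) ^ 2 + B ^ 2 - 2‖ ≤ 1 / 4 := by
    exact_mod_cast PadicInt.norm_sq_add_sq_sub_two_le (PadicInt.isUnit_iff.2 ha)
      (PadicInt.isUnit_iff.2 hb)
  have h2 : ‖(A : ℚ_[2]) ^ 2 + B ^ 2 - 2‖ < ‖(2 : ℚ_[2])‖ := by rw [norm_two]; linarith
  rw [← sub_add_cancel ((A : ℚ_[2]) ^ 2 + B ^ 2) 2,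
    IsUltrametricDist.norm_add_eq_right_of_norm_lt h2, norm_two]

lemma norm_sq_add_sq_of_norm_eq {a b : ℚ_[2]} (h : ‖a‖ = ‖b‖) :
    ‖a ^ 2 + b ^ 2‖ = ‖a‖ ^ 2 / 2 := by
  rcases eq_or_ne a 0 with rfl | ha
  · obtain rfl : b = 0 := norm_eq_zero.1 (by simpa using h.symm)
    simp
  have hba : ‖b / a‖ = 1 := by rw [norm_div, h, div_self (by simpa [← h] using ha)]
  rw [show a ^ 2 + b ^ 2 = a ^ 2 * (1 ^ 2 + (b / a) ^ 2) by field_simp, norm_mul, norm_pow,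
    norm_sq_add_sq_of_norm_eq_one (by simp) hba]
  ring

lemma norm_sq_le_two_mul_norm_sq_add_sq (a b : ℚ_[2]) : ‖a‖ ^ 2 ≤ 2 * ‖a ^ 2 + b ^ 2‖ := by
  rcases lt_trichotomy ‖a‖ ‖b‖ with h | h | h
  · have h2 : ‖a ^ 2‖ < ‖b ^ 2‖ := by
      simpa only [norm_pow] using pow_lt_pow_left₀ h (norm_nonneg a) two_ne_zero
    rw [IsUltrametricDist.norm_add_eq_right_of_norm_lt h2, norm_pow]
    nlinarith [norm_nonneg a]
  · rw [norm_sq_add_sq_of_norm_eq h]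
    linarith
  · have h2 : ‖b ^ 2‖ < ‖a ^ 2‖ := by
      simpa only [norm_pow] using pow_lt_pow_left₀ h (norm_nonneg b) two_ne_zero
    rw [add_comm, IsUltrametricDist.norm_add_eq_right_of_norm_lt h2, norm_pow]
    nlinarith [norm_nonneg a]

lemma norm_le_one_of_norm_sq_add_sq_le_one {a b : ℚ_[2]} (h : ‖a ^ 2 + b ^ 2‖ ≤ 1) : ‖a‖ ≤ 1 :=
  norm_le_one_of_norm_lt_two (by nlinarith [norm_sq_le_two_mul_norm_sq_add_sq a b, norm_nonneg a])

lemma sq_ne_neg_one (r : ℚ_[2]) : r ^ 2 ≠ -1 := by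
  intro h
  have := norm_sq_le_two_mul_norm_sq_add_sq 1 r
  rw [h] at this
  norm_num at this

lemma norm_sq_sub_sq_sub_one_sq_add_le {a b : ℚ_[2]} (ha : ‖a‖ = 1) (hb : ‖b‖ ≤ 1 / 2) :
    ‖(a ^ 2 - b ^ 2 - 1) ^ 2 + (2 * a * b) ^ 2‖ ≤ 1 / 32 := by
  have hc : ‖b / 2‖ ≤ 1 := by rw [norm_div, norm_two]; linarith
  obtain ⟨A, rfl⟩ : ∃ A : ℤ_[2], (A : ℚ_[2]) = a := ⟨⟨a, ha.le⟩, rfl⟩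
  obtain ⟨C, hC⟩ : ∃ C : ℤ_[2], (C : ℚ_[2]) = b / 2 := ⟨⟨b / 2, hc⟩, rfl⟩
  rw [show b = 2 * C by rw [hC]; ring]
  exact_mod_cast PadicInt.norm_sq_sub_sq_sub_one_sq_add_le (c := C) (PadicInt.isUnit_iff.2 ha)

lemma norm_natCast_of_mod_sixteen {n : ℕ} (hn : n % 16 = 8) : ‖(n : ℚ_[2])‖ = 1 / 8 := by
  obtain ⟨m, rfl⟩ : ∃ m, n = 8 * m := ⟨n / 8, by omega⟩
  have hm : ‖(m : ℚ_[2])‖ = 1 := norm_natCast_eq_one_iff.2 (by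
    rw [Nat.coprime_two_left]; exact Nat.odd_iff.2 (by omega))
  rw [Nat.cast_mul, norm_mul, hm, show ((8 : ℕ) : ℚ_[2]) = 2 ^ 3 by norm_num, norm_pow,
    norm_two]
  norm_num

lemma exists_sq_eq_natCast_of_mod_eight {n : ℕ} (hn : n % 8 = 1) : ∃ s : ℚ_[2], s ^ 2 = n := by
  have h2 : ‖(2 : ℤ_[2])‖ = 1 / 2 := by simpa using PadicInt.norm_p (p := 2)
  have h8 : ‖((1 - n : ℤ) : ℤ_[2])‖ ≤ 2 ^ (-3 : ℤ) := by
    rw [PadicInt.norm_intCast_eq_padic_norm]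
    exact_mod_cast (norm_int_le_pow_iff_dvd (p := 2) (1 - n) 3).2
      (by rw [show ((2 : ℕ) : ℤ) ^ 3 = 8 by norm_num]; omega)
  obtain ⟨s, hs, -⟩ := hensels_lemma (p := 2) (F := Polynomial.X ^ 2 - Polynomial.C (n : ℤ_[2]))
    (a := 1) (by
      simp only [map_sub, map_pow, Polynomial.aeval_X, Polynomial.aeval_C, one_pow,
        Polynomial.derivative_X_pow, Polynomial.derivative_C]
      push_cast at h8
      norm_num [h2] at h8 ⊢
      linarith)
  refine ⟨s, ?_⟩
  have hs' : s ^ 2 = n := by simpa [sub_eq_zero] using hs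
  rw [← PadicInt.coe_pow, hs', PadicInt.coe_natCast]

end Padic

def quartic {R : Type*} [CommRing R] (c z : R) : R := z ^ 4 - c * z ^ 2 + 1

lemma quartic_inv {K : Type*} [Field K] (c : K) {z : K} (hz : z ≠ 0) :
    quartic c z⁻¹ = z⁻¹ ^ 4 * quartic c z := by
  unfold quartic
  field_simp
  ring

lemma eq_zero_iff_sq_eq_mul_quartic {R : Type*} [CommRing R] {α : R} (hα : α ^ 2 = -1)
    (c z w : R) : α * w ^ 2 + 1 - c * z ^ 2 + z ^ 4 = 0 ↔ w ^ 2 = α * quartic c z := by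
  unfold quartic
  constructor <;> intro h
  · linear_combination (-α) * h + w ^ 2 * hα
  · linear_combination α * h + (z ^ 4 - c * z ^ 2 + 1) * hα

lemma sq_eq_mul_quartic_two_mul_sq_sub_two {R : Type*} [CommRing R] {α : R} (hα : α ^ 2 = -1)
    (s : R) : ((1 + α) * s) ^ 2 = α * quartic (2 * s ^ 2 - 2) α := by
  unfold quartic
  linear_combination (s ^ 2 + 2 * α * s ^ 2 - α * (α ^ 2 + 1)) * hα

section QuadraticExtension

variable {L : Type*} [Field L] [Algebra ℚ_[2] L]

lemma linearIndependent_one_of_sq_eq_neg_one {α : L} (hα : α ^ 2 = -1) :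
    LinearIndependent ℚ_[2] ![1, α] := by
  refine linearIndependent_fin2.2 ⟨by rintro rfl; simp at hα, fun a ha => ?_⟩
  simp only [Matrix.cons_val_one, Matrix.cons_val_zero, Algebra.smul_def] at ha
  apply Padic.sq_ne_neg_one a
  apply (algebraMap ℚ_[2] L).injective
  rw [map_pow, map_neg, map_one, ← neg_eq_iff_eq_neg, ← neg_one_mul, ← hα, ← mul_pow, mul_comm,
    ha, one_pow]

noncomputable def basisOneAlpha (hdim : Module.finrank ℚ_[2] L = 2) {α : L} (hα : α ^ 2 = -1) :
    Module.Basis (Fin 2) ℚ_[2] L :=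
  basisOfLinearIndependentOfCardEqFinrank (linearIndependent_one_of_sq_eq_neg_one hα)
    (by simp [hdim])

lemma coe_basisOneAlpha (hdim : Module.finrank ℚ_[2] L = 2) {α : L} (hα : α ^ 2 = -1) :
    ⇑(basisOneAlpha hdim hα) = ![1, α] :=
  coe_basisOfLinearIndependentOfCardEqFinrank _ _

lemma basisOneAlpha_repr (hdim : Module.finrank ℚ_[2] L = 2) {α : L} (hα : α ^ 2 = -1)
    (a b : ℚ_[2]) :
    (basisOneAlpha hdim hα).repr (algebraMap ℚ_[2] L a + algebraMap ℚ_[2] L b * α) = ![a, b] := by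
  have h : algebraMap ℚ_[2] L a + algebraMap ℚ_[2] L b * α =
      a • basisOneAlpha hdim hα 0 + b • basisOneAlpha hdim hα 1 := by
    simp [coe_basisOneAlpha, Algebra.smul_def]
  ext i
  fin_cases i <;> simp [h]

lemma exists_eq_algebraMap_add_mul (hdim : Module.finrank ℚ_[2] L = 2) {α : L}
    (hα : α ^ 2 = -1) (x : L) :
    ∃ a b : ℚ_[2], x = algebraMap ℚ_[2] L a + algebraMap ℚ_[2] L b * α := by
  have h := (basisOneAlpha hdim hα).sum_repr x
  rw [Fin.sum_univ_two, coe_basisOneAlpha] at h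
  exact ⟨_, _, by simpa [Algebra.smul_def] using h.symm⟩

lemma norm_algebraMap_add_mul (hdim : Module.finrank ℚ_[2] L = 2) {α : L} (hα : α ^ 2 = -1)
    (a b : ℚ_[2]) :
    Algebra.norm ℚ_[2] (algebraMap ℚ_[2] L a + algebraMap ℚ_[2] L b * α) = a ^ 2 + b ^ 2 := by
  have hmul : (algebraMap ℚ_[2] L a + algebraMap ℚ_[2] L b * α) * α =
      algebraMap ℚ_[2] L (-b) + algebraMap ℚ_[2] L a * α := by
    rw [map_neg]
    linear_combination algebraMap ℚ_[2] L b * hα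
  rw [Algebra.norm_eq_matrix_det (basisOneAlpha hdim hα), Matrix.det_fin_two]
  simp only [Algebra.leftMulMatrix_eq_repr_mul, coe_basisOneAlpha, Matrix.cons_val_zero,
    Matrix.cons_val_one, mul_one, hmul, basisOneAlpha_repr]
  ring

noncomputable def absNorm (x : L) : ℝ := ‖Algebra.norm ℚ_[2] x‖

lemma absNorm_nonneg (x : L) : 0 ≤ absNorm x := norm_nonneg _

lemma absNorm_mul (x y : L) : absNorm (x * y) = absNorm x * absNorm y := by
  simp [absNorm]

lemma absNorm_pow (x : L) (n : ℕ) : absNorm (x ^ n) = absNorm x ^ n := by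
  simp [absNorm]

lemma absNorm_one : absNorm (1 : L) = 1 := by
  simp [absNorm]

lemma absNorm_neg (x : L) : absNorm (-x) = absNorm x := by
  have h : absNorm (-1 : L) ^ 2 = 1 := by rw [← absNorm_pow, neg_one_sq, absNorm_one]
  rw [neg_eq_neg_one_mul, absNorm_mul,
    (pow_eq_one_iff_of_nonneg (absNorm_nonneg _) two_ne_zero).1 h, one_mul]

lemma absNorm_algebraMap (hdim : Module.finrank ℚ_[2] L = 2) (a : ℚ_[2]) :
    absNorm (algebraMap ℚ_[2] L a) = ‖a‖ ^ 2 := by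
  simp [absNorm, Algebra.norm_algebraMap, hdim]

lemma absNorm_eq_zero (hdim : Module.finrank ℚ_[2] L = 2) {x : L} : absNorm x = 0 ↔ x = 0 := by
  have : Module.Finite ℚ_[2] L := Module.finite_of_finrank_pos (by omega)
  simp [absNorm]

lemma absNorm_le_half_of_lt_one {x : L} (h : absNorm x < 1) : absNorm x ≤ 1 / 2 :=
  Padic.norm_le_half_of_norm_lt_one h

lemma absNorm_algebraMap_add_mul (hdim : Module.finrank ℚ_[2] L = 2) {α : L} (hα : α ^ 2 = -1)
    (a b : ℚ_[2]) :
    absNorm (algebraMap ℚ_[2] L a + algebraMap ℚ_[2] L b * α) = ‖a ^ 2 + b ^ 2‖ := by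
  rw [absNorm, norm_algebraMap_add_mul hdim hα]

lemma absNorm_of_sq_eq_neg_one {α : L} (hα : α ^ 2 = -1) : absNorm α = 1 := by
  have h : absNorm α ^ 2 = 1 := by rw [← absNorm_pow, hα, absNorm_neg, absNorm_one]
  exact (pow_eq_one_iff_of_nonneg (absNorm_nonneg _) two_ne_zero).1 h

lemma absNorm_algebraMap_add (hdim : Module.finrank ℚ_[2] L = 2) {α : L} (hα : α ^ 2 = -1)
    {ε : ℚ_[2]} (hε : ‖ε‖ = 1) : absNorm (algebraMap ℚ_[2] L ε + α) = 1 / 2 := by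
  have h := absNorm_algebraMap_add_mul hdim hα ε 1
  rwa [map_one, one_mul, Padic.norm_sq_add_sq_of_norm_eq_one hε norm_one] at h

lemma absNorm_one_add_le_one (hdim : Module.finrank ℚ_[2] L = 2) {α : L} (hα : α ^ 2 = -1)
    {t : L} (ht : absNorm t ≤ 1) : absNorm (1 + t) ≤ 1 := by
  obtain ⟨a, b, rfl⟩ := exists_eq_algebraMap_add_mul hdim hα t
  rw [absNorm_algebraMap_add_mul hdim hα] at ht
  have ha := Padic.norm_le_one_of_norm_sq_add_sq_le_one ht
  have hb := Padic.norm_le_one_of_norm_sq_add_sq_le_one ((add_comm (a ^ 2) _) ▸ ht)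
  have ha' : ‖1 + a‖ ≤ 1 :=
    (IsUltrametricDist.norm_add_le_max _ _).trans (max_le norm_one.le ha)
  rw [← add_assoc, ← map_one (algebraMap ℚ_[2] L), ← map_add, absNorm_algebraMap_add_mul hdim hα]
  refine (IsUltrametricDist.norm_add_le_max _ _).trans (max_le ?_ ?_) <;>
    rw [norm_pow] <;> nlinarith [norm_nonneg (1 + a), norm_nonneg b]

lemma absNorm_add_le (hdim : Module.finrank ℚ_[2] L = 2) {α : L} (hα : α ^ 2 = -1) (x y : L) :
    absNorm (x + y) ≤ max (absNorm x) (absNorm y) := by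
  wlog hxy : absNorm x ≤ absNorm y generalizing x y
  · rw [add_comm, max_comm]
    exact this y x (le_of_not_ge hxy)
  rcases eq_or_ne y 0 with rfl | hy
  · have hx : x = 0 := (absNorm_eq_zero hdim).1
      (le_antisymm (hxy.trans_eq ((absNorm_eq_zero hdim).2 rfl)) (absNorm_nonneg x))
    simp [hx]
  have hy' : 0 < absNorm y := (absNorm_nonneg y).lt_of_ne' ((absNorm_eq_zero hdim).not.2 hy)
  have hq : absNorm y * absNorm (x / y) = absNorm x := by
    rw [← absNorm_mul, mul_div_cancel₀ _ hy]
  have hxy' : absNorm (x / y) ≤ 1 := le_of_mul_le_mul_left (by rwa [hq, mul_one]) hy'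
  calc absNorm (x + y) = absNorm y * absNorm (1 + x / y) := by
        rw [← absNorm_mul]; congr 1; field_simp; ring
    _ ≤ absNorm y :=
      mul_le_of_le_one_right (absNorm_nonneg y) (absNorm_one_add_le_one hdim hα hxy')
    _ ≤ max (absNorm x) (absNorm y) := le_max_right _ _

lemma absNorm_add_eq_of_lt (hdim : Module.finrank ℚ_[2] L = 2) {α : L} (hα : α ^ 2 = -1)
    {x y : L} (h : absNorm x < absNorm y) : absNorm (x + y) = absNorm y := by
  refine le_antisymm ((absNorm_add_le hdim hα x y).trans_eq (max_eq_right h.le)) ?_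
  by_contra! h'
  have := absNorm_add_le hdim hα (x + y) (-x)
  rw [add_neg_cancel_comm, absNorm_neg] at this
  exact (this.trans_lt (max_lt h' h)).false

lemma absNorm_two (hdim : Module.finrank ℚ_[2] L = 2) : absNorm (2 : L) = 1 / 4 := by
  rw [← map_ofNat (algebraMap ℚ_[2] L) 2, absNorm_algebraMap hdim, Padic.norm_two]
  norm_num

lemma absNorm_add_le_of_le (hdim : Module.finrank ℚ_[2] L = 2) {α : L} (hα : α ^ 2 = -1)
    {x y : L} {c : ℝ} (hx : absNorm x ≤ c) (hy : absNorm y ≤ c) : absNorm (x + y) ≤ c :=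
  (absNorm_add_le hdim hα x y).trans (max_le hx hy)

lemma absNorm_sub_le_of_le (hdim : Module.finrank ℚ_[2] L = 2) {α : L} (hα : α ^ 2 = -1)
    {x y : L} {c : ℝ} (hx : absNorm x ≤ c) (hy : absNorm y ≤ c) : absNorm (x - y) ≤ c :=
  sub_eq_add_neg x y ▸ absNorm_add_le_of_le hdim hα hx (by rwa [absNorm_neg])

lemma absNorm_sq_sub_one_le (hdim : Module.finrank ℚ_[2] L = 2) {α : L} (hα : α ^ 2 = -1)
    {a b : ℚ_[2]} (ha : ‖a‖ = 1) (hb : ‖b‖ ≤ 1 / 2) :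
    absNorm ((algebraMap ℚ_[2] L a + algebraMap ℚ_[2] L b * α) ^ 2 - 1) ≤ 1 / 32 := by
  have h : (algebraMap ℚ_[2] L a + algebraMap ℚ_[2] L b * α) ^ 2 - 1 =
      algebraMap ℚ_[2] L (a ^ 2 - b ^ 2 - 1) + algebraMap ℚ_[2] L (2 * a * b) * α := by
    simp only [map_sub, map_mul, map_pow, map_one, map_ofNat]
    linear_combination algebraMap ℚ_[2] L b ^ 2 * hα
  rw [h, absNorm_algebraMap_add_mul hdim hα]
  exact Padic.norm_sq_sub_sq_sub_one_sq_add_le ha hb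

lemma exists_absNorm_sq_sub_le (hdim : Module.finrank ℚ_[2] L = 2) {α : L} (hα : α ^ 2 = -1)
    {x : L} (hx : absNorm x = 1) :
    ∃ ε : ℚ_[2], ε ^ 2 = 1 ∧ absNorm (x ^ 2 - algebraMap ℚ_[2] L ε) ≤ 1 / 32 := by
  obtain ⟨a, b, rfl⟩ := exists_eq_algebraMap_add_mul hdim hα x
  rw [absNorm_algebraMap_add_mul hdim hα] at hx
  have ha := Padic.norm_le_one_of_norm_sq_add_sq_le_one hx.le
  have hb := Padic.norm_le_one_of_norm_sq_add_sq_le_one ((add_comm (a ^ 2) _) ▸ hx.le)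
  rcases ha.lt_or_eq with ha | ha <;> rcases hb.lt_or_eq with hb | hb
  · have h := IsUltrametricDist.norm_add_le_max (a ^ 2) (b ^ 2)
    rw [hx, norm_pow, norm_pow] at h
    have := Padic.norm_le_half_of_norm_lt_one ha
    have := Padic.norm_le_half_of_norm_lt_one hb
    refine absurd h (not_le.2 (max_lt ?_ ?_)) <;> nlinarith [norm_nonneg a, norm_nonneg b]
  · -- `α x = -b + a α` has a unit as first coordinate, and `(α x) ^ 2 - 1 = -(x ^ 2 + 1)`
    refine ⟨-1, by norm_num, ?_⟩
    have h := absNorm_sq_sub_one_le hdim hα (a := -b) (b := a) (by rwa [norm_neg])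
      (Padic.norm_le_half_of_norm_lt_one ha)
    rwa [← absNorm_neg, show -((algebraMap ℚ_[2] L a + algebraMap ℚ_[2] L b * α) ^ 2 -
        algebraMap ℚ_[2] L (-1)) = (algebraMap ℚ_[2] L (-b) + algebraMap ℚ_[2] L a * α) ^ 2 - 1 by
      simp only [map_neg, map_one]
      linear_combination (-(algebraMap ℚ_[2] L a ^ 2 + algebraMap ℚ_[2] L b ^ 2)) * hα]
  · exact ⟨1, one_pow 2, by
      simpa using absNorm_sq_sub_one_le hdim hα ha (Padic.norm_le_half_of_norm_lt_one hb)⟩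
  · exact absurd (hx.symm.trans (Padic.norm_sq_add_sq_of_norm_eq_one ha hb)) (by norm_num)

lemma one_div_sixteen_lt_absNorm_sq_sub (hdim : Module.finrank ℚ_[2] L = 2) {α : L}
    (hα : α ^ 2 = -1) (w : L) : 1 / 16 < absNorm (w ^ 2 - α) := by
  by_contra! h
  have hα1 := absNorm_of_sq_eq_neg_one hα
  have hw2 : absNorm w ^ 2 = 1 := by
    rw [← absNorm_pow, ← sub_add_cancel (w ^ 2) α, absNorm_add_eq_of_lt hdim hα (by linarith), hα1]
  obtain ⟨ε, hε, hsq⟩ := exists_absNorm_sq_sub_le hdim hα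
    ((pow_eq_one_iff_of_nonneg (absNorm_nonneg w) two_ne_zero).1 hw2)
  have hε' : ‖-ε‖ = 1 := by rw [norm_neg, norm_eq_one_of_sq_eq_one hε]
  have : absNorm (w ^ 2 - algebraMap ℚ_[2] L ε) = 1 / 2 := by
    rw [show w ^ 2 - algebraMap ℚ_[2] L ε = (w ^ 2 - α) + (algebraMap ℚ_[2] L (-ε) + α) by
        rw [map_neg]; ring,
      absNorm_add_eq_of_lt hdim hα (by rw [absNorm_algebraMap_add hdim hα hε']; linarith),
      absNorm_algebraMap_add hdim hα hε']
  linarith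

lemma sq_ne_mul_quartic_of_absNorm_le_half (hdim : Module.finrank ℚ_[2] L = 2) {α : L}
    (hα : α ^ 2 = -1) {γ : ℚ_[2]} (hγ : ‖γ‖ ≤ 1 / 2) {z : L} (hz : absNorm z ≤ 1 / 2) (w : L) :
    w ^ 2 ≠ α * quartic (algebraMap ℚ_[2] L γ) z := by
  intro h
  have hz2 : absNorm (z ^ 2) ≤ 1 / 4 := by
    rw [absNorm_pow]; nlinarith [absNorm_nonneg z]
  have hsub : absNorm (z ^ 2 - algebraMap ℚ_[2] L γ) ≤ 1 / 4 :=
    absNorm_sub_le_of_le hdim hα hz2 (by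
      rw [absNorm_algebraMap hdim]; nlinarith [norm_nonneg γ])
  have : absNorm (w ^ 2 - α) ≤ 1 / 16 := by
    rw [show w ^ 2 - α = α * (z ^ 2 * (z ^ 2 - algebraMap ℚ_[2] L γ)) by rw [h, quartic]; ring,
      absNorm_mul, absNorm_mul, absNorm_of_sq_eq_neg_one hα, one_mul]
    nlinarith [absNorm_nonneg (z ^ 2), absNorm_nonneg (z ^ 2 - algebraMap ℚ_[2] L γ)]
  exact (one_div_sixteen_lt_absNorm_sq_sub hdim hα w).not_ge this

lemma exists_absNorm_quartic_sub_le (hdim : Module.finrank ℚ_[2] L = 2) {α : L}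
    (hα : α ^ 2 = -1) {γ : ℚ_[2]} (hγ : ‖γ‖ ≤ 1 / 2) {z : L} (hz : absNorm z = 1) :
    ∃ ε : ℚ_[2], ε ^ 2 = 1 ∧
      absNorm (quartic (algebraMap ℚ_[2] L γ) z - algebraMap ℚ_[2] L (2 - ε * γ)) ≤ 1 / 128 := by
  obtain ⟨ε, hε, hδ⟩ := exists_absNorm_sq_sub_le hdim hα hz
  refine ⟨ε, hε, ?_⟩
  set δ := z ^ 2 - algebraMap ℚ_[2] L ε
  have hεL : algebraMap ℚ_[2] L ε ^ 2 = 1 := by rw [← map_pow, hε, map_one]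
  have key : quartic (algebraMap ℚ_[2] L γ) z - algebraMap ℚ_[2] L (2 - ε * γ) =
      δ * (δ + algebraMap ℚ_[2] L (2 * ε - γ)) := by
    simp only [quartic, δ, map_sub, map_mul, map_ofNat]
    linear_combination hεL
  have h2εγ : ‖2 * ε - γ‖ ≤ 1 / 2 := by
    refine (sub_eq_add_neg (2 * ε) γ ▸ IsUltrametricDist.norm_add_le_max _ _).trans
      (max_le ?_ (by rwa [norm_neg]))
    rw [norm_mul, Padic.norm_two, norm_eq_one_of_sq_eq_one hε, mul_one]
  have hsum : absNorm (δ + algebraMap ℚ_[2] L (2 * ε - γ)) ≤ 1 / 4 :=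
    absNorm_add_le_of_le hdim hα (by linarith) (by
      rw [absNorm_algebraMap hdim]; nlinarith [norm_nonneg (2 * ε - γ)])
  rw [key, absNorm_mul]
  nlinarith [absNorm_nonneg δ, absNorm_nonneg (δ + algebraMap ℚ_[2] L (2 * ε - γ))]

lemma exists_sq_norm_sub_two_mul_le (hdim : Module.finrank ℚ_[2] L = 2) {α : L}
    (hα : α ^ 2 = -1) {g : ℚ_[2]} (hg : ‖g‖ = 1 / 2) {R : L} (hR : absNorm R ≤ 1 / 128) {w : L}
    (hw : w ^ 2 = α * (algebraMap ℚ_[2] L g + R)) :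
    ∃ ε : ℚ_[2], ε ^ 2 = 1 ∧ ‖g - 2 * ε‖ ^ 2 ≤ 1 / 128 := by
  have hα1 := absNorm_of_sq_eq_neg_one hα
  have hα0 : α ≠ 0 := by rintro rfl; simp at hα
  have hgR : absNorm (algebraMap ℚ_[2] L g + R) = 1 / 4 := by
    rw [add_comm, absNorm_add_eq_of_lt hdim hα (by rw [absNorm_algebraMap hdim, hg]; linarith),
      absNorm_algebraMap hdim, hg]
    norm_num
  have hπ : absNorm (1 + α) = 1 / 2 := by
    simpa using absNorm_algebraMap_add hdim hα (ε := 1) norm_one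
  have hπ0 : 1 + α ≠ 0 := by
    intro h; rw [h, (absNorm_eq_zero hdim).2 rfl] at hπ; norm_num at hπ
  -- `1 + α` is a uniformiser with `(1 + α) ^ 2 = 2 α`, so `w = (1 + α) u` with `u` a unit
  obtain ⟨u, hwu⟩ : ∃ u, w = (1 + α) * u := ⟨w / (1 + α), (mul_div_cancel₀ w hπ0).symm⟩
  have hu : absNorm u = 1 := by
    have h := congrArg absNorm hw
    rw [hwu, absNorm_pow, absNorm_mul, absNorm_mul, hπ, hα1, hgR] at h
    exact (pow_eq_one_iff_of_nonneg (absNorm_nonneg u) two_ne_zero).1 (by nlinarith)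
  obtain ⟨ε, hε, hsq⟩ := exists_absNorm_sq_sub_le hdim hα hu
  refine ⟨ε, hε, ?_⟩
  have h2u : algebraMap ℚ_[2] L g + R = 2 * u ^ 2 :=
    mul_left_cancel₀ hα0 (by rw [← hw, hwu]; linear_combination u ^ 2 * hα)
  have key : algebraMap ℚ_[2] L (g - 2 * ε) = 2 * (u ^ 2 - algebraMap ℚ_[2] L ε) - R := by
    simp only [map_sub, map_mul, map_ofNat]
    linear_combination h2u
  have h := absNorm_sub_le_of_le hdim hα (x := 2 * (u ^ 2 - algebraMap ℚ_[2] L ε))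
    (by rw [absNorm_mul, absNorm_two hdim]; linarith) hR
  rwa [← key, absNorm_algebraMap hdim] at h

lemma sq_ne_mul_quartic_of_absNorm_eq_one (hdim : Module.finrank ℚ_[2] L = 2) {α : L}
    (hα : α ^ 2 = -1) {γ : ℚ_[2]} (hγ : ‖γ‖ = 1 / 8) {z : L} (hz : absNorm z = 1) (w : L) :
    w ^ 2 ≠ α * quartic (algebraMap ℚ_[2] L γ) z := by
  intro hw
  obtain ⟨ε, hε, hR⟩ := exists_absNorm_quartic_sub_le hdim hα (by rw [hγ]; norm_num) hz
  have hεγ : ‖ε * γ‖ = 1 / 8 := by rw [norm_mul, norm_eq_one_of_sq_eq_one hε, hγ, one_mul]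
  have hg : ‖2 - ε * γ‖ = 1 / 2 := by
    rw [sub_eq_neg_add, IsUltrametricDist.norm_add_eq_right_of_norm_lt
      (by rw [norm_neg, hεγ, Padic.norm_two]; norm_num), Padic.norm_two]
  obtain ⟨ε', hε', hle⟩ := exists_sq_norm_sub_two_mul_le hdim hα hg hR (w := w)
    (by rw [hw, add_sub_cancel])
  have : 1 / 8 ≤ ‖2 - ε * γ - 2 * ε'‖ := by
    rcases sq_eq_one_iff.1 hε' with rfl | rfl
    · rw [show 2 - ε * γ - 2 * 1 = -(ε * γ) by ring, norm_neg, hεγ]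
    · rw [show 2 - ε * γ - 2 * -1 = -(ε * γ) + 2 ^ 2 by ring,
        IsUltrametricDist.norm_add_eq_right_of_norm_lt
          (by rw [norm_neg, hεγ, norm_pow, Padic.norm_two]; norm_num), norm_pow, Padic.norm_two]
      norm_num
  nlinarith

theorem sq_ne_mul_quartic (hdim : Module.finrank ℚ_[2] L = 2) {α : L} (hα : α ^ 2 = -1)
    {γ : ℚ_[2]} (hγ : ‖γ‖ = 1 / 8) (z w : L) : w ^ 2 ≠ α * quartic (algebraMap ℚ_[2] L γ) z := by
  have hγ' : ‖γ‖ ≤ 1 / 2 := by rw [hγ]; norm_num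
  intro hw
  rcases lt_trichotomy (absNorm z) 1 with hz | hz | hz
  · exact sq_ne_mul_quartic_of_absNorm_le_half hdim hα hγ' (absNorm_le_half_of_lt_one hz) w hw
  · exact sq_ne_mul_quartic_of_absNorm_eq_one hdim hα hγ hz w hw
  · have hz0 : z ≠ 0 := by rintro rfl; rw [(absNorm_eq_zero hdim).2 rfl] at hz; linarith
    have hinv : absNorm z⁻¹ < 1 := by
      have h := absNorm_mul z z⁻¹
      rw [mul_inv_cancel₀ hz0, absNorm_one] at h
      nlinarith [absNorm_nonneg z⁻¹]
    refine sq_ne_mul_quartic_of_absNorm_le_half hdim hα hγ' (absNorm_le_half_of_lt_one hinv)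
      (w * z⁻¹ ^ 2) ?_
    rw [quartic_inv _ hz0, mul_pow, hw]
    ring

end QuadraticExtension

theorem stmt_16_general (p q : ℕ) (hpq : q = p + 2)
    (hp3 : p % 4 = 3)
    (L : Type*) [Field L] [Algebra ℚ_[2] L] (hdim : Module.finrank ℚ_[2] L = 2)
    (α : L) (hα : α ^ 2 = -1) :
    (∃ z w : L, α * w ^ 2 + 1 - ((p : L) + (q : L)) * z ^ 2 + z ^ 4 = 0) ↔
      p % 8 = 7 := by
  have hc : (p : L) + q = algebraMap ℚ_[2] L ((p + q : ℕ) : ℚ_[2]) := by simp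
  simp only [hc, eq_zero_iff_sq_eq_mul_quartic hα]
  constructor
  · rintro ⟨z, w, h⟩
    by_contra h7
    exact sq_ne_mul_quartic hdim hα (Padic.norm_natCast_of_mod_sixteen (by omega)) z w h
  · intro h7
    obtain ⟨s, hs⟩ := Padic.exists_sq_eq_natCast_of_mod_eight (n := q) (by omega)
    refine ⟨α, (1 + α) * algebraMap ℚ_[2] L s, ?_⟩
    rw [sq_eq_mul_quartic_two_mul_sq_sub_two hα, ← map_pow, hs, map_natCast, map_natCast, hpq]
    congr 2
    push_cast
    ring

/-- Let `p` and `q` be primes with `q = p + 2` and `p ≡ 3 (mod 4)`. Let `L` be a field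
which is a `ℚ₂`-algebra of dimension 2 over `ℚ₂`, and `α ∈ L` with `α² = -1`. Then there
exist `z, w ∈ L` with `α·w² + 1 - (p+q)z² + z⁴ = 0` if and only if `p ≡ 7 (mod 8)`. -/
theorem stmt_16 (p q : ℕ) (hp : p.Prime) (hq : q.Prime) (hpq : q = p + 2)
    (hp3 : p % 4 = 3)
    (L : Type*) [Field L] [Algebra ℚ_[2] L] (hdim : Module.finrank ℚ_[2] L = 2)
    (α : L) (hα : α ^ 2 = -1) :
    (∃ z w : L, α * w ^ 2 + 1 - ((p : L) + (q : L)) * z ^ 2 + z ^ 4 = 0) ↔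
      p % 8 = 7 :=
  stmt_16_general p q hpq hp3 L hdim α hα
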